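/- arXiv:2509.01002 — 3 statements merged into one kernel-verified Lean document; each statement's English description precedes it below -/
import Mathlib

section
/- Let ψ ∈ ℂ with ψ^5 ≠ 1, and let z = (z_0,…,z_4) ∈ ℂ^5 satisfy, for every index i, z_i^4 = ψ · ∏_{j ≠ i} z_j (i.e. the gradient of the Dwork polynomial P_ψ(Z) = Σ_{i=0}^4 Z_i^5 − 5ψ ∏_{i=0}^4 Z_i vanishes at z, after dividing by 5). Then z = 0. In particular, for ψ^5 ≠ 1 the quintic hypersurface X_ψ = {P_ψ = 0} ⊂ ℙ^4 is smooth. -/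
/-!
Multiplying the `i`-th equation by `z i` gives `z i ^ 5 = ψ P` with `P = ∏ j, z j`, the same
right-hand side for every `i`. If `P = 0` every coordinate vanishes. Otherwise taking the product
over `i` gives `P ^ 5 = (ψ P) ^ 5`, and cancelling `P ^ 5` forces `ψ ^ 5 = 1`.
-/

open Finset

theorem pow_succ_eq_mul_prod_of_pow_eq_mul_prod_erase {M ι : Type*} [CommMonoid M] [Fintype ι]
    [DecidableEq ι] {z : ι → M} {ψ : M} {m : ℕ} {i : ι}
    (h : z i ^ m = ψ * ∏ j ∈ univ.erase i, z j) : z i ^ (m + 1) = ψ * ∏ j, z j := by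
  rw [pow_succ', h, mul_left_comm, mul_prod_erase _ _ (mem_univ i)]

theorem pow_card_eq_one_of_forall_pow_card_eq_mul_prod {M ι : Type*}
    [CommMonoidWithZero M] [IsCancelMulZero M] [Fintype ι] {z : ι → M} {ψ : M}
    (hz : ∀ i, z i ^ Fintype.card ι = ψ * ∏ j, z j) (hP : ∏ j, z j ≠ 0) :
    ψ ^ Fintype.card ι = 1 := by
  have hpow : (∏ j, z j) ^ Fintype.card ι = ψ ^ Fintype.card ι * (∏ j, z j) ^ Fintype.card ι :=
    calc (∏ j, z j) ^ Fintype.card ι = ∏ i, z i ^ Fintype.card ι := (prod_pow _ _ _).symm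
      _ = ∏ _i : ι, ψ * ∏ j, z j := prod_congr rfl fun i _ => hz i
      _ = ψ ^ Fintype.card ι * (∏ j, z j) ^ Fintype.card ι := by
        rw [prod_const, card_univ, mul_pow]
  exact mul_right_cancel₀ (pow_ne_zero _ hP) (by rw [one_mul, ← hpow])

/-- If `ψ^5 ≠ 1` and `z ∈ ℂ^5` satisfies `z_i^4 = ψ · ∏_{j ≠ i} z_j` for every `i`
(vanishing of the gradient of the Dwork polynomial, divided by 5), then `z = 0`.
In particular the Dwork quintic `X_ψ` is smooth for `ψ^5 ≠ 1`. -/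
theorem dwork_smooth_of_pow_five_ne_one (ψ : ℂ) (hψ : ψ ^ 5 ≠ 1)
    (z : Fin 5 → ℂ)
    (hgrad : ∀ i, z i ^ 4 = ψ * ∏ j ∈ Finset.univ.erase i, z j) :
    z = 0 := by
  have hfifth : ∀ i, z i ^ Fintype.card (Fin 5) = ψ * ∏ j, z j := fun i =>
    pow_succ_eq_mul_prod_of_pow_eq_mul_prod_erase (hgrad i)
  by_cases hP : ∏ j, z j = 0
  · funext i
    exact (pow_eq_zero_iff Fintype.card_ne_zero).mp (by rw [hfifth i, hP, mul_zero])
  · exact absurd (pow_card_eq_one_of_forall_pow_card_eq_mul_prod hfifth hP) hψ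
end

section
/- Let t ∈ ℂ. If z, w ∈ ℂ^4 satisfy Σ_{i=1}^4 z_i^2 = 0 = Σ_{i=1}^4 w_i^2, ‖z‖² > |t|/2, ‖w‖² > |t|/2, and Φ_t(z) = Φ_t(w), then z = w. That is, Φ_t is injective on V_0 ∩ {‖z‖² > |t|/2}. -/
/-!
On the conifold the cross term `2 Re(c̄ · Σ zᵢ²)` of `‖z + c z̄‖²` vanishes, so
`‖Φ_t(z)‖² = ‖z‖² + |t|²/(4‖z‖²)`, a strictly increasing function of `‖z‖²` beyond `|t|/2`.
Hence `Φ_t(z) = Φ_t(w)` forces `‖z‖ = ‖w‖`; then both sides use the same coefficient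
`c = t/(2‖z‖²)` with `|c| < 1`, and `u ↦ u + c ū` is injective on `ℂ`.
-/

open Finset

/-- The nearest point projection map `Φ_t(z) = z + (t/(2‖z‖²))·z̄`. -/
noncomputable def conifoldPhi (t : ℂ) (z : Fin 4 → ℂ) : Fin 4 → ℂ :=
  fun i => z i + t / (2 * ((∑ j, Complex.normSq (z j) : ℝ) : ℂ)) * (starRingEnd ℂ) (z i)

open ComplexConjugate

lemma Complex.normSq_add_mul_conj (v e : ℂ) :
    normSq (v + e * conj v) = (1 + normSq e) * normSq v + 2 * (conj e * v ^ 2).re := by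
  rw [normSq_add, normSq_mul, normSq_conj, map_mul, conj_conj]
  rw [show v * (conj e * v) = conj e * v ^ 2 by ring]
  ring

lemma Complex.sum_normSq_add_mul_conj {ι : Type*} [Fintype ι] {v : ι → ℂ}
    (hv : ∑ i, v i ^ 2 = 0) (e : ℂ) :
    ∑ i, normSq (v i + e * conj (v i)) = (1 + normSq e) * ∑ i, normSq (v i) := by
  have hcross : ∑ i, (conj e * v i ^ 2).re = 0 := by
    rw [← re_sum, ← mul_sum, hv, mul_zero, zero_re]
  simp only [normSq_add_mul_conj, sum_add_distrib, ← mul_sum, hcross, mul_zero, add_zero]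

lemma Complex.add_mul_conj_injective {c : ℂ} (hc : ‖c‖ < 1) :
    Function.Injective fun u : ℂ => u + c * conj u := by
  intro u v huv
  have hdiff : u - v = -c * conj (u - v) := by
    rw [map_sub]; linear_combination huv
  have hnorm : ‖u - v‖ = ‖c‖ * ‖u - v‖ :=
    calc ‖u - v‖ = ‖-c * conj (u - v)‖ := congrArg _ hdiff
      _ = ‖c‖ * ‖u - v‖ := by rw [norm_mul, norm_neg, norm_conj]
  have : ‖u - v‖ = 0 := by nlinarith [norm_nonneg (u - v)]
  exact sub_eq_zero.mp (norm_eq_zero.mp this)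

lemma strictMonoOn_add_sq_div (s : ℝ) :
    StrictMonoOn (fun x : ℝ => x + s ^ 2 / (4 * x)) (Set.Ioi (|s| / 2)) := by
  intro x hx y hy hxy
  simp only [Set.mem_Ioi] at hx hy
  have hx0 : 0 < x := lt_of_le_of_lt (by positivity) hx
  have hy0 : 0 < y := lt_of_le_of_lt (by positivity) hy
  have hs : s ^ 2 < 4 * x * y := by
    rw [← sq_abs]; nlinarith [abs_nonneg s]
  have hgap : y + s ^ 2 / (4 * y) - (x + s ^ 2 / (4 * x)) =
      (y - x) * (4 * x * y - s ^ 2) / (4 * x * y) := by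
    field_simp; ring
  have hgap_pos : 0 < (y - x) * (4 * x * y - s ^ 2) / (4 * x * y) :=
    div_pos (mul_pos (by linarith) (by linarith)) (by positivity)
  simp only
  linarith

lemma sum_normSq_conifoldPhi {t : ℂ} {z : Fin 4 → ℂ} (hz0 : ∑ i, z i ^ 2 = 0)
    (hz : ∑ i, Complex.normSq (z i) ≠ 0) :
    ∑ i, Complex.normSq (conifoldPhi t z i) =
      ∑ i, Complex.normSq (z i) + ‖t‖ ^ 2 / (4 * ∑ i, Complex.normSq (z i)) := by
  simp only [conifoldPhi]
  rw [Complex.sum_normSq_add_mul_conj hz0, Complex.normSq_div, Complex.normSq_mul,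
    Complex.normSq_ofReal, Complex.normSq_ofNat, Complex.normSq_eq_norm_sq]
  field_simp
  ring

/-- `Φ_t` is injective on `V_0 ∩ {‖z‖² > |t|/2}`. -/
theorem conifoldPhi_injective (t : ℂ) (z w : Fin 4 → ℂ)
    (hz0 : ∑ i, z i ^ 2 = 0) (hw0 : ∑ i, w i ^ 2 = 0)
    (hz : ‖t‖ / 2 < ∑ i, Complex.normSq (z i))
    (hw : ‖t‖ / 2 < ∑ i, Complex.normSq (w i))
    (h : conifoldPhi t z = conifoldPhi t w) :
    z = w := by
  have hzpos : 0 < ∑ i, Complex.normSq (z i) := (div_nonneg (norm_nonneg t) two_pos.le).trans_lt hz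
  have hwpos : 0 < ∑ i, Complex.normSq (w i) := (div_nonneg (norm_nonneg t) two_pos.le).trans_lt hw
  have hnorm : ∑ i, Complex.normSq (z i) = ∑ i, Complex.normSq (w i) := by
    refine (strictMonoOn_add_sq_div ‖t‖).injOn (by simpa using hz) (by simpa using hw) ?_
    rw [← sum_normSq_conifoldPhi hz0 hzpos.ne', ← sum_normSq_conifoldPhi hw0 hwpos.ne', h]
  have hc : ‖t / (2 * ((∑ j, Complex.normSq (z j) : ℝ) : ℂ))‖ < 1 := by
    rw [norm_div, norm_mul, Complex.norm_real, Real.norm_of_nonneg hzpos.le, Complex.norm_ofNat,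
      div_lt_one (by positivity)]
    linarith
  funext i
  exact Complex.add_mul_conj_injective hc (by simpa [conifoldPhi, hnorm] using congrFun h i)
end

section
/- For real τ > 1 define u(τ) = (τ²−1)^{-1/2} · (τ·√(τ²−1) − log(τ + √(τ²−1)))^{1/3} (real cube root). Then u satisfies, for every τ > 1, the equation τ·u(τ)³ + (τ²−1)·u(τ)²·u'(τ) = 2/3. (Here u = f' for the Candelas–de la Ossa potential f on the smoothed conifold V_1, and the equation is the reduced complex Monge–Ampère equation with c = 2/3.) -/
/-! With `μ = √(τ²−1)` one has `μ' = τ/μ`, so the reduced Monge–Ampère operator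
`τu³ + μ²u²u'` equals `u²μ(μu)'`. For the given `u`, `μu = F^{1/3}` with
`F = τμ − log(τ + μ)`, and `F' = 2μ`. Hence `u²μ(μu)' = (μu)²(μu)'/μ = F'/(3μ) = 2/3`. -/

open Real Filter Topology

/-- `(√(τ²−1) f')³` for the Candelas–de la Ossa potential `f`. -/
noncomputable def cdlOssaCube (τ : ℝ) : ℝ :=
  τ * √(τ ^ 2 - 1) - log (τ + √(τ ^ 2 - 1))

noncomputable def cdlOssaDeriv (τ : ℝ) : ℝ :=
  (τ ^ 2 - 1) ^ (-(1 : ℝ) / 2) * cdlOssaCube τ ^ ((1 : ℝ) / 3)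

noncomputable def reducedMongeAmpere (u : ℝ → ℝ) (τ : ℝ) : ℝ :=
  τ * u τ ^ 3 + (τ ^ 2 - 1) * u τ ^ 2 * deriv u τ

lemma hasDerivAt_sqrt_sq_sub_one {x : ℝ} (hx : x ^ 2 ≠ 1) :
    HasDerivAt (fun y => √(y ^ 2 - 1)) (x / √(x ^ 2 - 1)) x := by
  convert ((hasDerivAt_pow 2 x).sub_const 1).sqrt (sub_ne_zero.mpr hx) using 1
  push_cast
  field_simp

lemma add_sqrt_mul_sub_sqrt_eq_one {x : ℝ} (hx : 1 ≤ x ^ 2) :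
    (x + √(x ^ 2 - 1)) * (x - √(x ^ 2 - 1)) = 1 := by
  linear_combination -sq_sqrt (sub_nonneg.mpr hx)

lemma reducedMongeAmpere_eq_sq_mul_sqrt_mul_deriv {u : ℝ → ℝ} {x : ℝ}
    (hu : DifferentiableAt ℝ u x) (hx : 1 < x ^ 2) :
    reducedMongeAmpere u x = u x ^ 2 * √(x ^ 2 - 1) * deriv (fun y => √(y ^ 2 - 1) * u y) x := by
  have hs : 0 < √(x ^ 2 - 1) := sqrt_pos.mpr (by linarith)
  have hμu : HasDerivAt (fun y => √(y ^ 2 - 1) * u y) _ x :=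
    (hasDerivAt_sqrt_sq_sub_one hx.ne').mul hu.hasDerivAt
  rw [reducedMongeAmpere, hμu.deriv]
  field_simp
  rw [sq_sqrt (sub_pos.mpr hx).le]
  ring

lemma hasDerivAt_cdlOssaCube {x : ℝ} (hx : 1 < x ^ 2) :
    HasDerivAt cdlOssaCube (2 * √(x ^ 2 - 1)) x := by
  have hs : 0 < √(x ^ 2 - 1) := sqrt_pos.mpr (by linarith)
  have hsum : x + √(x ^ 2 - 1) ≠ 0 := fun h => by
    simpa [h] using add_sqrt_mul_sub_sqrt_eq_one hx.le
  have hμ := hasDerivAt_sqrt_sq_sub_one hx.ne'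
  refine (((hasDerivAt_id' x).mul hμ).sub (((hasDerivAt_id' x).add hμ).log hsum)).congr_deriv ?_
  rw [Pi.add_apply]
  field_simp
  linear_combination (-√(x ^ 2 - 1) - x) * sq_sqrt (sub_pos.mpr hx).le

lemma cdlOssaCube_pos {x : ℝ} (hx : 1 < x) : 0 < cdlOssaCube x := by
  set s := √(x ^ 2 - 1)
  have hs : 0 < s := sqrt_pos.mpr (by nlinarith)
  have hinv : (x + s)⁻¹ = x - s :=
    inv_eq_of_mul_eq_one_right (add_sqrt_mul_sub_sqrt_eq_one (by nlinarith))
  -- `log (x + s) = arcosh x`, and `sinh (arcosh x) = s`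
  have hlog : log (x + s) < s := by
    have h := self_lt_sinh_iff.mpr (log_pos (by linarith : 1 < x + s))
    rwa [sinh_log (by linarith), hinv, show (x + s - (x - s)) / 2 = s by ring] at h
  unfold cdlOssaCube
  nlinarith

lemma HasDerivAt.rpow_one_third {F : ℝ → ℝ} {x F' : ℝ} (hF : HasDerivAt F F' x) (hx : 0 < F x) :
    HasDerivAt (fun y => F y ^ (1 / 3 : ℝ)) (F' / (3 * (F x ^ (1 / 3 : ℝ)) ^ 2)) x := by
  refine (hF.rpow_const (Or.inl hx.ne')).congr_deriv ?_
  have hcube : (F x ^ (1 / 3 : ℝ)) ^ 3 = F x := by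
    rw [← rpow_natCast, ← rpow_mul hx.le]
    norm_num
  have hpos := rpow_pos_of_pos hx (1 / 3)
  rw [rpow_sub hx, rpow_one]
  nth_rewrite 2 [← hcube]
  field_simp

lemma sqrt_mul_rpow_neg_half {a : ℝ} (ha : 0 < a) : √a * a ^ (-(1 : ℝ) / 2) = 1 := by
  rw [sqrt_eq_rpow, ← rpow_add ha]
  norm_num

lemma sqrt_sq_sub_one_mul_cdlOssaDeriv_eventuallyEq {x : ℝ} (hx : 1 < x) :
    (fun y => √(y ^ 2 - 1) * cdlOssaDeriv y) =ᶠ[𝓝 x] fun y => cdlOssaCube y ^ ((1 : ℝ) / 3) := by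
  filter_upwards [Ioi_mem_nhds hx] with y (hy : 1 < y)
  rw [cdlOssaDeriv, ← mul_assoc, sqrt_mul_rpow_neg_half (by nlinarith), one_mul]

/-- The derivative of the Candelas–de la Ossa potential on the smoothed conifold `V_1`,
`u(τ) = (τ²−1)^{-1/2}(τ√(τ²−1) − log(τ+√(τ²−1)))^{1/3}`, satisfies the reduced
complex Monge–Ampère equation `τu³ + (τ²−1)u²u' = 2/3` for `τ > 1`. -/
theorem cdl_ossa_potential_solves_MA :
    ∀ τ : ℝ, 1 < τ →
      τ * (fun τ : ℝ => (τ ^ 2 - 1) ^ (-(1 : ℝ) / 2) *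
            (τ * Real.sqrt (τ ^ 2 - 1) - Real.log (τ + Real.sqrt (τ ^ 2 - 1))) ^ ((1 : ℝ) / 3)) τ ^ 3
        + (τ ^ 2 - 1) *
          (fun τ : ℝ => (τ ^ 2 - 1) ^ (-(1 : ℝ) / 2) *
            (τ * Real.sqrt (τ ^ 2 - 1) - Real.log (τ + Real.sqrt (τ ^ 2 - 1))) ^ ((1 : ℝ) / 3)) τ ^ 2
          * deriv (fun τ : ℝ => (τ ^ 2 - 1) ^ (-(1 : ℝ) / 2) *
            (τ * Real.sqrt (τ ^ 2 - 1) - Real.log (τ + Real.sqrt (τ ^ 2 - 1))) ^ ((1 : ℝ) / 3)) τ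
        = 2 / 3 := by
  intro τ hτ
  show reducedMongeAmpere cdlOssaDeriv τ = 2 / 3
  have hτ2 : 1 < τ ^ 2 := by nlinarith
  have hμ : 0 < √(τ ^ 2 - 1) := sqrt_pos.mpr (by linarith)
  have hcbrt := (hasDerivAt_cdlOssaCube hτ2).rpow_one_third (cdlOssaCube_pos hτ)
  have hμu := sqrt_sq_sub_one_mul_cdlOssaDeriv_eventuallyEq hτ
  have hμu_τ : √(τ ^ 2 - 1) * cdlOssaDeriv τ = cdlOssaCube τ ^ ((1 : ℝ) / 3) := hμu.self_of_nhds
  have hu_pos : 0 < cdlOssaDeriv τ :=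
    pos_of_mul_pos_right (hμu_τ ▸ rpow_pos_of_pos (cdlOssaCube_pos hτ) _) hμ.le
  have hu : DifferentiableAt ℝ cdlOssaDeriv τ :=
    (((hasDerivAt_pow 2 τ).sub_const 1).rpow_const (Or.inl (by linarith))).differentiableAt.mul
      hcbrt.differentiableAt
  rw [reducedMongeAmpere_eq_sq_mul_sqrt_mul_deriv hu hτ2, hμu.deriv_eq, hcbrt.deriv, ← hμu_τ]
  field_simp
end
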